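/- Let 0 < q < p ≤ 1, n ≥ 2, and α, β ≥ 0. The second central moment of the (p,q)-Bernstein-Stancu operator is S_{n,p,q}((t - x)²; x) = [(q[n]_{p,q}[n-1]_{p,q} - [n]_{p,q}² + β²) x² + (p^{n-1}[n]_{p,q} - 2αβ) x + α²]/([n]_{p,q} + β)² for all x ∈ [0,1]. -/

import Mathlib

open Finset Filter

noncomputable def pqInt (p q : ℝ) (n : ℕ) : ℝ := ∑ i ∈ Finset.range n, p ^ (n - 1 - i) * q ^ i

noncomputable def pqFact (p q : ℝ) (n : ℕ) : ℝ := ∏ j ∈ Finset.range n, pqInt p q (j + 1)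

noncomputable def pqChoose (p q : ℝ) (n k : ℕ) : ℝ :=
  pqFact p q n / (pqFact p q k * pqFact p q (n - k))

noncomputable def pqBasis (p q : ℝ) (n k : ℕ) (x : ℝ) : ℝ :=
  (1 / p ^ (n * (n - 1) / 2)) * pqChoose p q n k * p ^ (k * (k - 1) / 2) * x ^ k *
    ∏ s ∈ Finset.range (n - k), (p ^ s - q ^ s * x)

noncomputable def S (p q α β : ℝ) (n : ℕ) (f : ℝ → ℝ) (x : ℝ) : ℝ :=
  ∑ k ∈ Finset.range (n + 1),
    pqBasis p q n k x * f ((p ^ (n - k) * pqInt p q k + α) / (pqInt p q n + β))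

/-! The (p,q)-Bernstein basis sums to `1`: by the (p,q)-Pascal rule, `p ^ n` times the degree-`n+1`
basis is `p ^ n` times the degree-`n` basis plus a telescoping term. The absorption identity
`[k+1] C(n+1,k+1) = [n+1] C(n,k)` turns the node `p^(n-k) [k+1]` times the degree-`n+1` basis into
`[n+1] x` times the degree-`n` basis, the powers of `p` cancelling exactly; this gives the first
moment `[n] x` of the nodes and, with `[k+1] = p^k + q [k]`, the second moment
`[n] x (p^(n-1) + q [n-1] x)`. Expanding the square finishes. -/

lemma pqInt_zero (p q : ℝ) : pqInt p q 0 = 0 := by simp [pqInt]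

lemma pqInt_add (p q : ℝ) (m k : ℕ) :
    pqInt p q (m + k) = p ^ k * pqInt p q m + q ^ m * pqInt p q k := by
  unfold pqInt
  rw [sum_range_add, mul_sum, mul_sum]
  congr 1 <;> refine sum_congr rfl fun i hi => ?_ <;> rw [mem_range] at hi
  · rw [show m + k - 1 - i = k + (m - 1 - i) by omega, pow_add]; ring
  · rw [show m + k - 1 - (m + i) = k - 1 - i by omega, pow_add]; ring

lemma pqInt_succ (p q : ℝ) (n : ℕ) : pqInt p q (n + 1) = p ^ n + q * pqInt p q n := by
  simpa [add_comm 1 n, pqInt] using pqInt_add p q 1 n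

lemma pqFact_succ (p q : ℝ) (n : ℕ) :
    pqFact p q (n + 1) = pqFact p q n * pqInt p q (n + 1) :=
  prod_range_succ _ _

lemma pqFact_zero (p q : ℝ) : pqFact p q 0 = 1 := prod_range_zero _

variable {p q : ℝ}

lemma pqInt_succ_pos (hp : 0 < p) (hq : 0 < q) (n : ℕ) : 0 < pqInt p q (n + 1) :=
  sum_pos (fun _ _ => by positivity) nonempty_range_add_one

lemma pqFact_pos (hp : 0 < p) (hq : 0 < q) (n : ℕ) : 0 < pqFact p q n :=
  prod_pos fun j _ => pqInt_succ_pos hp hq j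

section pqChoose

variable (hp : 0 < p) (hq : 0 < q)
include hp hq

lemma pqChoose_zero_right (n : ℕ) : pqChoose p q n 0 = 1 := by
  rw [pqChoose, Nat.sub_zero, pqFact_zero, one_mul, div_self (pqFact_pos hp hq n).ne']

lemma pqChoose_self (n : ℕ) : pqChoose p q n n = 1 := by
  rw [pqChoose, Nat.sub_self, pqFact_zero, mul_one, div_self (pqFact_pos hp hq n).ne']

lemma pqChoose_succ_succ {n k : ℕ} (hk : k < n) :
    pqChoose p q (n + 1) (k + 1) =
      p ^ (k + 1) * pqChoose p q n (k + 1) + q ^ (n - k) * pqChoose p q n k := by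
  obtain ⟨j, rfl⟩ := Nat.exists_eq_add_of_lt hk
  have hsplit := pqInt_add p q (j + 1) (k + 1)
  rw [show j + 1 + (k + 1) = k + j + 1 + 1 by ring] at hsplit
  simp only [pqChoose, show k + j + 1 + 1 - (k + 1) = j + 1 by omega,
    show k + j + 1 - (k + 1) = j by omega, show k + j + 1 - k = j + 1 by omega]
  rw [pqFact_succ p q (k + j + 1), pqFact_succ p q j, pqFact_succ p q k, hsplit]
  have := (pqFact_pos hp hq (k + j + 1)).ne'
  have := (pqFact_pos hp hq k).ne'
  have := (pqFact_pos hp hq j).ne'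
  have := (pqInt_succ_pos hp hq k).ne'
  have := (pqInt_succ_pos hp hq j).ne'
  field_simp

lemma pqChoose_succ_succ_mul_pqInt {n k : ℕ} (hk : k ≤ n) :
    pqChoose p q (n + 1) (k + 1) * pqInt p q (k + 1) = pqInt p q (n + 1) * pqChoose p q n k := by
  simp only [pqChoose, show n + 1 - (k + 1) = n - k by omega, pqFact_succ]
  have := (pqFact_pos hp hq k).ne'
  have := (pqFact_pos hp hq (n - k)).ne'
  have := (pqInt_succ_pos hp hq k).ne'
  field_simp

end pqChoose

section pqBasis

variable (hp : 0 < p) (hq : 0 < q) (x : ℝ)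
include hp hq

lemma pow_mul_pqBasis_succ_zero (n : ℕ) :
    p ^ n * pqBasis p q (n + 1) 0 x = (p ^ n - q ^ n * x) * pqBasis p q n 0 x := by
  simp only [pqBasis, pqChoose_zero_right hp hq, Nat.sub_zero, prod_range_succ, Nat.triangle_succ,
    pow_add]
  have := hp.ne'
  field

lemma pqBasis_succ_self (n : ℕ) : pqBasis p q (n + 1) (n + 1) x = x * pqBasis p q n n x := by
  simp only [pqBasis, pqChoose_self hp hq, Nat.sub_self, Nat.triangle_succ, pow_add, pow_succ]
  have := hp.ne'
  field_simp

lemma pow_mul_pqBasis_succ_succ {n k : ℕ} (hk : k < n) :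
    p ^ n * pqBasis p q (n + 1) (k + 1) x =
      (p ^ n - p ^ (k + 1) * q ^ (n - (k + 1)) * x) * pqBasis p q n (k + 1) x +
        x * p ^ k * q ^ (n - k) * pqBasis p q n k x := by
  obtain ⟨j, rfl⟩ := Nat.exists_eq_add_of_lt hk
  simp only [pqBasis, pqChoose_succ_succ hp hq hk, show k + j + 1 + 1 - (k + 1) = j + 1 by omega,
    show k + j + 1 - (k + 1) = j by omega, show k + j + 1 - k = j + 1 by omega, prod_range_succ,
    Nat.triangle_succ, pow_add, pow_succ]
  have := hp.ne'
  field_simp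

lemma sum_pqBasis (n : ℕ) : ∑ k ∈ range (n + 1), pqBasis p q n k x = 1 := by
  induction n with
  | zero => simp [pqBasis, pqChoose_self hp hq]
  | succ n ih =>
    set c : ℕ → ℝ := fun k => x * p ^ k * q ^ (n - k) * pqBasis p q n k x
    have hinterior : ∀ k ∈ range n, p ^ n * pqBasis p q (n + 1) (k + 1) x =
        p ^ n * pqBasis p q n (k + 1) x + (c k - c (k + 1)) := fun k hk => by
      rw [pow_mul_pqBasis_succ_succ hp hq x (mem_range.mp hk)]
      ring
    refine mul_left_cancel₀ (pow_ne_zero n hp.ne') ?_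
    rw [mul_sum, sum_range_succ', sum_range_succ, sum_congr rfl hinterior, sum_add_distrib,
      sum_range_sub', pow_mul_pqBasis_succ_zero hp hq, pqBasis_succ_self hp hq, ← ih, mul_sum,
      sum_range_succ' _ n]
    simp only [c, Nat.sub_self, Nat.sub_zero, pow_zero]
    ring

lemma pqBasis_succ_succ_mul {n k : ℕ} (hk : k ≤ n) :
    pqBasis p q (n + 1) (k + 1) x * (p ^ (n - k) * pqInt p q (k + 1)) =
      pqInt p q (n + 1) * x * pqBasis p q n k x := by
  have habsorb := pqChoose_succ_succ_mul_pqInt hp hq hk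
  obtain ⟨j, rfl⟩ := Nat.exists_eq_add_of_le hk
  simp only [pqBasis, show k + j + 1 - (k + 1) = j by omega, Nat.add_sub_cancel_left,
    Nat.triangle_succ, pow_add, pow_succ]
  have := hp.ne'
  field_simp
  linear_combination (x * x ^ k * ∏ s ∈ range j, (p ^ s - x * q ^ s)) * habsorb

lemma sum_pqBasis_succ_mul_node (n : ℕ) (g : ℕ → ℝ) :
    ∑ k ∈ range (n + 2), pqBasis p q (n + 1) k x * (p ^ (n + 1 - k) * pqInt p q k) * g k =
      pqInt p q (n + 1) * x * ∑ k ∈ range (n + 1), pqBasis p q n k x * g (k + 1) := by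
  rw [sum_range_succ', pqInt_zero, mul_sum]
  simp only [mul_zero, zero_mul, add_zero, Nat.add_sub_add_right]
  refine sum_congr rfl fun k hk => ?_
  rw [pqBasis_succ_succ_mul hp hq x (Nat.lt_succ_iff.mp (mem_range.mp hk))]
  ring

lemma sum_pqBasis_mul_node (n : ℕ) :
    ∑ k ∈ range (n + 1), pqBasis p q n k x * (p ^ (n - k) * pqInt p q k) = pqInt p q n * x := by
  cases n with
  | zero => simp [pqInt_zero]
  | succ n => simpa [sum_pqBasis hp hq] using sum_pqBasis_succ_mul_node hp hq x n fun _ => 1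

lemma sum_pqBasis_mul_node_sq (n : ℕ) :
    ∑ k ∈ range (n + 1), pqBasis p q n k x * (p ^ (n - k) * pqInt p q k) ^ 2 =
      pqInt p q n * x * (p ^ (n - 1) + q * pqInt p q (n - 1) * x) := by
  cases n with
  | zero => simp [pqInt_zero]
  | succ n =>
    have hnode : ∀ k ∈ range (n + 1),
        pqBasis p q n k x * (p ^ (n + 1 - (k + 1)) * pqInt p q (k + 1)) =
          p ^ n * pqBasis p q n k x + q * (pqBasis p q n k x * (p ^ (n - k) * pqInt p q k)) := by
      intro k hk
      rw [Nat.add_sub_add_right, pqInt_succ, mul_add, ← mul_assoc,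
        pow_sub_mul_pow p (Nat.lt_succ_iff.mp (mem_range.mp hk))]
      ring
    calc _ = ∑ k ∈ range (n + 2), pqBasis p q (n + 1) k x * (p ^ (n + 1 - k) * pqInt p q k) *
          (p ^ (n + 1 - k) * pqInt p q k) := by simp only [sq, mul_assoc]
      _ = pqInt p q (n + 1) * x * (p ^ n + q * (pqInt p q n * x)) := by
        rw [sum_pqBasis_succ_mul_node hp hq, sum_congr rfl hnode, sum_add_distrib, ← mul_sum,
          ← mul_sum, sum_pqBasis hp hq, sum_pqBasis_mul_node hp hq, mul_one]
      _ = _ := by rw [Nat.add_sub_cancel]; ring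

end pqBasis

theorem S_second_central_moment_general (p q α β : ℝ) (hq : 0 < q) (hqp : q < p)
    (hβ : 0 ≤ β) (n : ℕ) (hn : 2 ≤ n) (x : ℝ) :
    S p q α β n (fun t => (t - x) ^ 2) x =
      ((q * pqInt p q n * pqInt p q (n - 1) - pqInt p q n ^ 2 + β ^ 2) * x ^ 2 +
        (p ^ (n - 1) * pqInt p q n - 2 * α * β) * x + α ^ 2) / (pqInt p q n + β) ^ 2 := by
  have hp : 0 < p := hq.trans hqp
  have hD : pqInt p q n + β ≠ 0 := by
    obtain ⟨m, rfl⟩ := Nat.exists_eq_add_of_le' (one_le_two.trans hn)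
    exact (add_pos_of_pos_of_nonneg (pqInt_succ_pos hp hq m) hβ).ne'
  rw [S]
  set D := pqInt p q n + β
  have hterm : ∀ k, pqBasis p q n k x * ((p ^ (n - k) * pqInt p q k + α) / D - x) ^ 2 =
      (pqBasis p q n k x * (p ^ (n - k) * pqInt p q k) ^ 2 +
        2 * (α - x * D) * (pqBasis p q n k x * (p ^ (n - k) * pqInt p q k)) +
        (α - x * D) ^ 2 * pqBasis p q n k x) / D ^ 2 := fun k => by
    field_simp
    ring
  simp only [hterm, ← sum_div, sum_add_distrib, ← mul_sum, sum_pqBasis hp hq,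
    sum_pqBasis_mul_node hp hq, sum_pqBasis_mul_node_sq hp hq]
  field_simp
  ring

theorem S_second_central_moment (p q α β : ℝ) (hq : 0 < q) (hqp : q < p) (hp : p ≤ 1)
    (hα : 0 ≤ α) (hβ : 0 ≤ β) (n : ℕ) (hn : 2 ≤ n)
    (x : ℝ) (hx : x ∈ Set.Icc (0 : ℝ) 1) :
    S p q α β n (fun t => (t - x) ^ 2) x =
      ((q * pqInt p q n * pqInt p q (n - 1) - pqInt p q n ^ 2 + β ^ 2) * x ^ 2 +
        (p ^ (n - 1) * pqInt p q n - 2 * α * β) * x + α ^ 2) / (pqInt p q n + β) ^ 2 :=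
  S_second_central_moment_general p q α β hq hqp hβ n hn x
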